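/- arXiv:2207.13156 — 3 statements merged into one kernel-verified Lean document; each statement's English description precedes it below -/
import Mathlib

section
/- Let k be a field, g a Lie algebra over k with trivial center, and X = k ⊕ g with Δ(a,x) = (a,x)⊗(1,0) + (1,0)⊗(0,x), ε(a,x) = a, and q((a,x)⊗(b,y)) = (ab, bx + [x,y]). Let φ : X ⊗ X → X be a BSD 2-cocycle: φ satisfies the 2-cochain condition Δ∘φ = (φ⊗q + q⊗φ)∘(id⊗τ⊗id)∘(Δ⊗Δ) and δ²φ = 0, where δ²φ(u⊗v⊗w) = q(φ(u⊗v)⊗w) + φ(q(u⊗v)⊗w) − φ(q(u⊗w⁽¹⁾)⊗q(v⊗w⁽²⁾)) − q(φ(u⊗w⁽¹⁾)⊗q(v⊗w⁽²⁾)) − q(q(u⊗w⁽¹⁾)⊗φ(v⊗w⁽²⁾)) in Sweedler notation Δ(w) = w⁽¹⁾⊗w⁽²⁾. Then φ is special: there exists a bilinear map ψ : g × g → g such that φ((a,x)⊗(b,y)) = (0, ψ(x,y)) for all a,b ∈ k and x,y ∈ g. -/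
open TensorProduct

set_option maxHeartbeats 1000000

noncomputable section

variable (k : Type*) [Field k] (g : Type*) [LieRing g] [LieAlgebra k g]

/-- The comultiplication `Δ(a,x) = (a,x)⊗(1,0) + (1,0)⊗(0,x)` on `X = k ⊕ g`. -/
def Dmap : (k × g) →ₗ[k] (k × g) ⊗[k] (k × g) :=
  (TensorProduct.mk k (k × g) (k × g)).flip ((1 : k), (0 : g))
    + TensorProduct.mk k (k × g) (k × g) ((1 : k), (0 : g)) ∘ₗ
      (LinearMap.inr k k g ∘ₗ LinearMap.snd k k g)

/-- The Lie bracket of `g` as a bilinear map. -/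
def brk : g →ₗ[k] g →ₗ[k] g :=
  LinearMap.mk₂ k (fun x y => ⁅x, y⁆) add_lie smul_lie lie_add lie_smul

/-- The self-distributive map `q((a,x)⊗(b,y)) = (ab, b•x + ⁅x,y⁆)` on `X = k ⊕ g`. -/
def qmap : (k × g) ⊗[k] (k × g) →ₗ[k] (k × g) :=
  LinearMap.inl k k g ∘ₗ LinearMap.mul' k k ∘ₗ
      TensorProduct.map (LinearMap.fst k k g) (LinearMap.fst k k g)
    + LinearMap.inr k k g ∘ₗ
      ((TensorProduct.rid k g).toLinearMap ∘ₗ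
          TensorProduct.map (LinearMap.snd k k g) (LinearMap.fst k k g)
        + TensorProduct.lift (brk k g) ∘ₗ
          TensorProduct.map (LinearMap.snd k k g) (LinearMap.snd k k g))

/-- `f : X → X` is a coderivation of the coalgebra `X = k ⊕ g`. -/
def IsCoderivation (f : (k × g) →ₗ[k] (k × g)) : Prop :=
  Dmap k g ∘ₗ f
    = (TensorProduct.map f LinearMap.id + TensorProduct.map LinearMap.id f) ∘ₗ Dmap k g

/-- The BSD 2-cochain condition `Δ∘φ = (φ⊗q + q⊗φ)∘(id⊗τ⊗id)∘(Δ⊗Δ)`. -/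
def IsBSD2Cochain (φ : (k × g) ⊗[k] (k × g) →ₗ[k] (k × g)) : Prop :=
  Dmap k g ∘ₗ φ
    = (TensorProduct.map φ (qmap k g) + TensorProduct.map (qmap k g) φ) ∘ₗ
        (TensorProduct.tensorTensorTensorComm k (k × g) (k × g) (k × g) (k × g)).toLinearMap ∘ₗ
        TensorProduct.map (Dmap k g) (Dmap k g)

/-- `(u⊗v)⊗w ↦ (u⊗w⁽¹⁾)⊗(v⊗w⁽²⁾)`, the Sweedler-shuffling used in the BSD differential. -/
def Smap : ((k × g) ⊗[k] (k × g)) ⊗[k] (k × g) →ₗ[k]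
    ((k × g) ⊗[k] (k × g)) ⊗[k] ((k × g) ⊗[k] (k × g)) :=
  (TensorProduct.tensorTensorTensorComm k (k × g) (k × g) (k × g) (k × g)).toLinearMap ∘ₗ
    TensorProduct.map LinearMap.id (Dmap k g)

/-- The BSD first differential
`δ¹f(u⊗v) = f(q(u⊗v)) − q(f(u)⊗v) − q(u⊗f(v))`. -/
def bsdD1 (f : (k × g) →ₗ[k] (k × g)) : (k × g) ⊗[k] (k × g) →ₗ[k] (k × g) :=
  f ∘ₗ qmap k g - qmap k g ∘ₗ TensorProduct.map f LinearMap.id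
    - qmap k g ∘ₗ TensorProduct.map LinearMap.id f

/-- The BSD second differential
`δ²φ(u⊗v⊗w) = q(φ(u⊗v)⊗w) + φ(q(u⊗v)⊗w) − φ(q(u⊗w⁽¹⁾)⊗q(v⊗w⁽²⁾))`
`− q(φ(u⊗w⁽¹⁾)⊗q(v⊗w⁽²⁾)) − q(q(u⊗w⁽¹⁾)⊗φ(v⊗w⁽²⁾))`. -/
def bsdD2 (φ : (k × g) ⊗[k] (k × g) →ₗ[k] (k × g)) :
    ((k × g) ⊗[k] (k × g)) ⊗[k] (k × g) →ₗ[k] (k × g) :=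
  qmap k g ∘ₗ TensorProduct.map φ LinearMap.id
    + φ ∘ₗ TensorProduct.map (qmap k g) LinearMap.id
    - φ ∘ₗ TensorProduct.map (qmap k g) (qmap k g) ∘ₗ Smap k g
    - qmap k g ∘ₗ TensorProduct.map φ (qmap k g) ∘ₗ Smap k g
    - qmap k g ∘ₗ TensorProduct.map (qmap k g) φ ∘ₗ Smap k g

section Aux

variable {k : Type*} [Field k] {g : Type*} [LieRing g] [LieAlgebra k g]

lemma Dmap_tmul (p : k × g) :
    Dmap k g p = p ⊗ₜ[k] ((1:k), (0:g)) + ((1:k), (0:g)) ⊗ₜ[k] ((0:k), p.2) := by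
  simp [Dmap]

lemma qmap_tmul (p q : k × g) :
    qmap k g (p ⊗ₜ[k] q) = (p.1 * q.1, q.1 • p.2 + ⁅p.2, q.2⁆) := by
  simp [qmap, brk, Prod.ext_iff]

/-- extraction `ε ⊗ ε`. -/
def E1 : (k × g) ⊗[k] (k × g) →ₗ[k] k :=
  LinearMap.mul' k k ∘ₗ TensorProduct.map (LinearMap.fst k k g) (LinearMap.fst k k g)

lemma E1_tmul (p q : k × g) : E1 (p ⊗ₜ[k] q) = p.1 * q.1 := by simp [E1]

/-- extraction `(f ∘ pr₂) ⊗ pr₂` followed by scalar action. -/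
def E2 (f : Module.Dual k g) : (k × g) ⊗[k] (k × g) →ₗ[k] g :=
  TensorProduct.lift (LinearMap.mk₂ k (fun p q => f p.2 • q.2)
    (by intro m₁ m₂ n; simp [add_smul])
    (by intro c m n; simp [mul_smul])
    (by intro m n₁ n₂; simp [smul_add])
    (by intro c m n; simp [smul_comm c]))

lemma E2_tmul (f : Module.Dual k g) (p q : k × g) :
    E2 f (p ⊗ₜ[k] q) = f p.2 • q.2 := by simp [E2]

lemma sym_zero (hcenter : ∀ x : g, (∀ y : g, ⁅x, y⁆ = 0) → x = 0) (v : g)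
    (h : ∀ (f : Module.Dual k g) (x : g), f x • v + f v • x = 0) : v = 0 := by
  by_cases h0 : ∀ f : Module.Dual k g, f v = 0
  · exact (Module.forall_dual_apply_eq_zero_iff k v).mp h0
  · push_neg at h0
    obtain ⟨f, hf⟩ := h0
    apply hcenter
    intro y
    have hy := h f y
    have hy2 : y = -((f v)⁻¹ * f y) • v := by
      have h3 : f v • y = -(f y • v) := by linear_combination (norm := module) hy
      have h4 : (f v)⁻¹ • (f v • y) = (f v)⁻¹ • (-(f y • v)) := by rw [h3]
      rw [smul_smul, inv_mul_cancel₀ hf, one_smul] at h4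
      exact h4.trans (by module)
    rw [hy2]
    simp

end Aux

/-- If `g` has trivial center, any BSD 2-cocycle `φ` on `X = k ⊕ g` is special:
`φ((a,x)⊗(b,y)) = (0, ψ(x,y))` for some bilinear map `ψ : g × g → g`. -/
theorem stmt6 {k : Type*} [Field k] {g : Type*} [LieRing g] [LieAlgebra k g]
    (hcenter : ∀ x : g, (∀ y : g, ⁅x, y⁆ = 0) → x = 0)
    (φ : (k × g) ⊗[k] (k × g) →ₗ[k] (k × g))
    (hφ : IsBSD2Cochain k g φ) (hcocycle : bsdD2 k g φ = 0) :
    ∃ ψ : g →ₗ[k] g →ₗ[k] g,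
      ∀ (a b : k) (x y : g), φ ((a, x) ⊗ₜ[k] (b, y)) = ((0 : k), ψ x y) := by
  classical
  -- first components vanish
  have hF : ∀ (a b : k) (x y : g),
      a*b*(φ (((1:k),(0:g)) ⊗ₜ[k] ((1:k),(0:g)))).1
      + a*(φ (((1:k),(0:g)) ⊗ₜ[k] ((0:k),y))).1
      + b*(φ (((0:k),x) ⊗ₜ[k] ((1:k),(0:g)))).1
      + (φ (((0:k),x) ⊗ₜ[k] ((0:k),y))).1 = 0 := by
    intro a b x y
    have h := LinearMap.congr_fun hφ (((a,x) : k × g) ⊗ₜ[k] ((b,y) : k × g))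
    have h2 := congrArg (E1 (k := k) (g := g)) h
    simp only [LinearMap.comp_apply, LinearMap.add_apply, LinearEquiv.coe_coe,
      TensorProduct.map_tmul, Dmap_tmul, tmul_add, add_tmul,
      TensorProduct.tensorTensorTensorComm_tmul, qmap_tmul, map_add, E1_tmul] at h2
    simp at h2
    linear_combination -h2
  have hD1 : ∀ x y : g, (φ (((0:k),x) ⊗ₜ[k] ((0:k),y))).1 = 0 := by
    intro x y; have := hF 0 0 x y; simpa using this
  have hC1 : ∀ x : g, (φ (((0:k),x) ⊗ₜ[k] ((1:k),(0:g)))).1 = 0 := by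
    intro x; have := hF 0 1 x 0; simpa [hD1] using this
  have hB1 : ∀ y : g, (φ (((1:k),(0:g)) ⊗ₜ[k] ((0:k),y))).1 = 0 := by
    intro y; have := hF 1 0 0 y; simpa [hD1] using this
  have hA1 : (φ (((1:k),(0:g)) ⊗ₜ[k] ((1:k),(0:g)))).1 = 0 := by
    have := hF 1 1 0 0; simpa [hD1, hB1, hC1] using this
  -- cocycle instance (e, e, (0,z))
  have hcoc1 : ∀ z : g, ⁅(φ (((1:k),(0:g)) ⊗ₜ[k] ((1:k),(0:g)))).2, z⁆ = 0 := by
    intro z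
    have h := LinearMap.congr_fun hcocycle
      (((((1:k),(0:g)) : k × g) ⊗ₜ[k] (((1:k),(0:g)) : k × g)) ⊗ₜ[k] (((0:k),z) : k × g))
    simp only [bsdD2, Smap, LinearMap.comp_apply, LinearMap.add_apply, LinearMap.sub_apply,
      LinearEquiv.coe_coe, LinearMap.id_coe, id_eq,
      TensorProduct.map_tmul, Dmap_tmul, tmul_add, add_tmul,
      TensorProduct.tensorTensorTensorComm_tmul, qmap_tmul, map_add, LinearMap.zero_apply] at h
    simp [Prod.mk_zero_zero] at h
    exact h.2
  have hA : φ (((1:k),(0:g)) ⊗ₜ[k] ((1:k),(0:g))) = 0 := by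
    rw [Prod.ext_iff]
    exact ⟨by simpa using hA1, by simpa using hcenter _ hcoc1⟩
  have hsym : ∀ (f : Module.Dual k g) (x y : g),
      f x • (φ (((1:k),(0:g)) ⊗ₜ[k] ((0:k),y))).2
        + f ((φ (((1:k),(0:g)) ⊗ₜ[k] ((0:k),y))).2) • x = 0 := by
    intro f x y
    have h := LinearMap.congr_fun hφ ((((0:k),x) : k × g) ⊗ₜ[k] (((0:k),y) : k × g))
    have h2 := congrArg (E2 (k := k) (g := g) f) h
    simp only [LinearMap.comp_apply, LinearMap.add_apply, LinearEquiv.coe_coe,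
      TensorProduct.map_tmul, Dmap_tmul, tmul_add, add_tmul,
      TensorProduct.tensorTensorTensorComm_tmul, qmap_tmul, map_add, E2_tmul] at h2
    simp [hA] at h2
    linear_combination (norm := module) -h2
  have hB : ∀ y : g, φ (((1:k),(0:g)) ⊗ₜ[k] ((0:k),y)) = 0 := by
    intro y
    rw [Prod.ext_iff]
    refine ⟨by simpa using hB1 y, by simpa using sym_zero hcenter _ (fun f x => hsym f x y)⟩
  have hEqA : ∀ x z : g, ⁅(φ (((0:k),x) ⊗ₜ[k] ((1:k),(0:g)))).2, z⁆
      = (φ (((0:k),⁅x,z⁆) ⊗ₜ[k] ((1:k),(0:g)))).2 := by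
    intro x z
    have h := LinearMap.congr_fun hcocycle
      (((((0:k),x) : k × g) ⊗ₜ[k] (((1:k),(0:g)) : k × g)) ⊗ₜ[k] (((0:k),z) : k × g))
    simp only [bsdD2, Smap, LinearMap.comp_apply, LinearMap.add_apply, LinearMap.sub_apply,
      LinearEquiv.coe_coe, LinearMap.id_coe, id_eq,
      TensorProduct.map_tmul, Dmap_tmul, tmul_add, add_tmul,
      TensorProduct.tensorTensorTensorComm_tmul, qmap_tmul, map_add, LinearMap.zero_apply] at h
    simp [hA, hB, Prod.mk_zero_zero] at h
    have h2 := congrArg Prod.snd h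
    simp at h2
    linear_combination (norm := module) h2
  have hEqB : ∀ x y : g, (φ (((0:k),⁅x,y⁆) ⊗ₜ[k] ((1:k),(0:g)))).2
      = ⁅(φ (((0:k),x) ⊗ₜ[k] ((1:k),(0:g)))).2, y⁆
        + ⁅x, (φ (((0:k),y) ⊗ₜ[k] ((1:k),(0:g)))).2⁆ := by
    intro x y
    have h := LinearMap.congr_fun hcocycle
      (((((0:k),x) : k × g) ⊗ₜ[k] (((0:k),y) : k × g)) ⊗ₜ[k] (((1:k),(0:g)) : k × g))
    simp only [bsdD2, Smap, LinearMap.comp_apply, LinearMap.add_apply, LinearMap.sub_apply,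
      LinearEquiv.coe_coe, LinearMap.id_coe, id_eq,
      TensorProduct.map_tmul, Dmap_tmul, tmul_add, add_tmul,
      TensorProduct.tensorTensorTensorComm_tmul, qmap_tmul, map_add, LinearMap.zero_apply] at h
    simp [hA, hB, hC1, Prod.mk_zero_zero] at h
    have h2 := congrArg Prod.snd h
    simp at h2
    linear_combination (norm := module) h2
  have hC2 : ∀ y x : g, ⁅x, (φ (((0:k),y) ⊗ₜ[k] ((1:k),(0:g)))).2⁆ = 0 := by
    intro y x
    linear_combination (norm := module) - hEqB x y - hEqA x y
  have hC : ∀ x : g, φ (((0:k),x) ⊗ₜ[k] ((1:k),(0:g))) = 0 := by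
    intro x
    rw [Prod.ext_iff]
    refine ⟨by simpa using hC1 x, ?_⟩
    have h0 : (φ (((0:k),x) ⊗ₜ[k] ((1:k),(0:g)))).2 = 0 :=
      hcenter _ (fun w => by rw [← lie_skew, hC2 x w, neg_zero])
    simpa using h0
  refine ⟨LinearMap.mk₂ k (fun x y => (φ (((0:k),x) ⊗ₜ[k] ((0:k),y))).2)
    (fun x x' y => by
      have e1 : (((0:k), x+x') : k × g) = ((0:k),x) + ((0:k),x') := by simp
      beta_reduce; rw [e1, add_tmul, map_add, Prod.snd_add])
    (fun c x y => by
      have e1 : (((0:k), c • x) : k × g) = c • ((0:k),x) := by simp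
      beta_reduce; rw [e1, ← smul_tmul', map_smul, Prod.smul_snd])
    (fun x y y' => by
      have e1 : (((0:k), y+y') : k × g) = ((0:k),y) + ((0:k),y') := by simp
      beta_reduce; rw [e1, tmul_add, map_add, Prod.snd_add])
    (fun c x y => by
      have e1 : (((0:k), c • y) : k × g) = c • ((0:k),y) := by simp
      beta_reduce; rw [e1, tmul_smul, map_smul, Prod.smul_snd]), ?_⟩
  intro a b x y
  have e1 : ((a,x) : k × g) = a • ((1:k),(0:g)) + ((0:k),x) := by simp
  have e2 : ((b,y) : k × g) = b • ((1:k),(0:g)) + ((0:k),y) := by simp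
  have expand : φ ((a,x) ⊗ₜ[k] (b,y)) = φ (((0:k),x) ⊗ₜ[k] ((0:k),y)) := by
    rw [e1, e2]
    simp only [add_tmul, tmul_add, ← smul_tmul', tmul_smul, map_add, map_smul, hA, hB, hC,
      smul_zero, add_zero, zero_add]
  rw [expand, Prod.ext_iff]
  exact ⟨by simpa using hD1 x y, by simp⟩

end
end

section
/- Let k be a field, g a Lie algebra over k, and X = k ⊕ g with Δ(a,x) = (a,x)⊗(1,0) + (1,0)⊗(0,x) and q((a,x)⊗(b,y)) = (ab, bx + [x,y]). Let φ : g × g → g be a Lie 2-cocycle and suppose that Ψ²(φ) = δ¹f for some coderivation f : X → X, where Ψ²(φ)((a,x)⊗(b,y)) = (0, φ(x,y)) and δ¹f(u⊗v) = f(q(u⊗v)) − q(f(u)⊗v) − q(u⊗f(v)). Then φ is a Lie 2-coboundary: there exists a linear map h : g → g with φ(x,y) = h([x,y]) − [h(x),y] − [x,h(y)] for all x,y ∈ g. In particular, Ψ² induces an injective map from second Lie cohomology of g into second BSD cohomology of X. -/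
open TensorProduct

noncomputable section

variable (k : Type*) [Field k] (g : Type*) [LieRing g] [LieAlgebra k g]

/-- `Ψ²(φ)((a,x)⊗(b,y)) = (0, φ(x,y))`. -/
def Psi2 (φ : g →ₗ[k] g →ₗ[k] g) : (k × g) ⊗[k] (k × g) →ₗ[k] (k × g) :=
  LinearMap.inr k k g ∘ₗ TensorProduct.lift φ ∘ₗ
    TensorProduct.map (LinearMap.snd k k g) (LinearMap.snd k k g)

/-- If `φ` is a Lie 2-cocycle and `Ψ²(φ) = δ¹f` for some coderivation `f : X → X`, then
`φ` is a Lie 2-coboundary: `φ(x,y) = h([x,y]) − [h(x),y] − [x,h(y)]` for some linear `h`.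
In particular `Ψ²` is injective on second cohomology. -/
theorem stmt8 {k : Type*} [Field k] {g : Type*} [LieRing g] [LieAlgebra k g]
    (φ : g →ₗ[k] g →ₗ[k] g)
    (hcocycle : ∀ x y z : g,
      ⁅φ x y, z⁆ + ⁅φ y z, x⁆ + ⁅φ z x, y⁆
        + φ ⁅x, y⁆ z + φ ⁅y, z⁆ x + φ ⁅z, x⁆ y = 0)
    (f : (k × g) →ₗ[k] (k × g)) (hf : IsCoderivation k g f)
    (hcobound : Psi2 k g φ = bsdD1 k g f) :
    ∃ h : g →ₗ[k] g, ∀ x y : g, φ x y = h ⁅x, y⁆ - ⁅h x, y⁆ - ⁅x, h y⁆ := by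

    -- Step 1: the k-component of f(0,y) vanishes, by applying fst⊗fst to the coderivation law.
    have hfst : ∀ y : g, (f ((0 : k), y)).1 = 0 := by
      intro y
      have h1 := LinearMap.congr_fun hf ((0 : k), y)
      have h2 := congrArg (LinearMap.mul' k k ∘ₗ
        TensorProduct.map (LinearMap.fst k k g) (LinearMap.fst k k g)) h1
      simp [Dmap, TensorProduct.map_tmul, LinearMap.mul'_apply] at h2
      exact h2
    refine ⟨(LinearMap.snd k k g) ∘ₗ f ∘ₗ (LinearMap.inr k k g), ?_⟩
    intro x y
    have h1 := congrArg Prod.snd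
      (LinearMap.congr_fun hcobound (((0:k), x) ⊗ₜ[k] ((0:k), y)))
    simp [Psi2, bsdD1, qmap, brk, hfst, TensorProduct.map_tmul] at h1 ⊢
    exact h1


end
end

section
/- Let k be a field and g a Lie algebra over k with trivial center, and let X = k ⊕ g with Δ(a,x) = (a,x)⊗(1,0) + (1,0)⊗(0,x) and q((a,x)⊗(b,y)) = (ab, bx + [x,y]). Then for every BSD 2-cocycle φ : X ⊗ X → X there exists a Lie 2-cocycle σ : g × g → g such that φ = Ψ²(σ), i.e. φ((a,x)⊗(b,y)) = (0, σ(x,y)) for all a,b ∈ k, x,y ∈ g. Consequently Ψ² induces an isomorphism between the second Lie cohomology of g and the second BSD cohomology of X. -/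
open TensorProduct

noncomputable section

variable (k : Type*) [Field k] (g : Type*) [LieRing g] [LieAlgebra k g]

section AuxiliaryLemmas

variable {k : Type*} [Field k] {g : Type*} [LieRing g] [LieAlgebra k g]

lemma Dmap_apply' (p : k × g) :
    Dmap k g p = p ⊗ₜ[k] ((1:k), (0:g)) + ((1:k),(0:g)) ⊗ₜ[k] ((0:k), p.2) := by
  simp [Dmap]

lemma qmap_apply' (p r : k × g) :
    qmap k g (p ⊗ₜ[k] r) = (p.1*r.1, r.1 • p.2 + ⁅p.2, r.2⁆) := by
  simp [qmap, brk]

lemma aux_center (hcenter : ∀ x : g, (∀ y : g, ⁅x, y⁆ = 0) → x = 0)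
    (v : g) (h : ∀ x : g, v ⊗ₜ[k] x + x ⊗ₜ[k] v = (0 : g ⊗[k] g)) : v = 0 := by
  by_cases hv : v = 0
  · exact hv
  · obtain ⟨f, hf⟩ := LinearMap.exists_leftInverse_of_injective
      (LinearMap.toSpanSingleton k g v)
      (by rw [LinearMap.ker_toSpanSingleton (R := k) (M := g) hv])
    have hfv : f v = 1 := by
      have := LinearMap.congr_fun hf 1
      simpa [LinearMap.toSpanSingleton_apply] using this
    have key : ∀ x : g, x = -(f x) • v := by
      intro x
      have h2 := congrArg ((TensorProduct.lid k g).toLinearMap ∘ₗ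
        TensorProduct.map f LinearMap.id) (h x)
      simp [hfv] at h2
      rw [neg_smul, eq_neg_iff_add_eq_zero]
      exact h2
    have : ∀ y : g, ⁅v, y⁆ = 0 := by
      intro y
      rw [key y]
      simp
    exact hcenter v this

lemma lie_two_cocycle_of_J
    (hcenter : ∀ x : g, (∀ y : g, ⁅x, y⁆ = 0) → x = 0)
    (σ : g →ₗ[k] g →ₗ[k] g)
    (hJ : ∀ x y z : g, ⁅σ x y, z⁆ + σ ⁅x, y⁆ z
        = ⁅x, σ y z⁆ + ⁅σ x z, y⁆ + σ ⁅x, z⁆ y + σ x ⁅y, z⁆) :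
    ∀ x y z : g,
      ⁅σ x y, z⁆ + ⁅σ y z, x⁆ + ⁅σ z x, y⁆
        + σ ⁅x, y⁆ z + σ ⁅y, z⁆ x + σ ⁅z, x⁆ y = 0 := by
  have skew : ∀ u v : g, ⁅u, v⁆ = -⁅v, u⁆ := fun u v => by rw [← lie_skew]
  have E1 : ∀ x y z : g, ⁅σ x y, z⁆ + ⁅σ y x, z⁆
      = (σ x ⁅y, z⁆ + σ ⁅y, z⁆ x) + (σ y ⁅x, z⁆ + σ ⁅x, z⁆ y) := by
    intro x y z
    have a := hJ x y z
    have b := hJ y x z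
    rw [skew y (σ x z), skew y x] at b
    rw [skew x (σ y z)] at a
    simp only [map_neg, LinearMap.neg_apply, neg_neg] at a b
    linear_combination (norm := abel1) a + b
  have E2 : ∀ x y z : g,
      (⁅σ x y, z⁆ + ⁅σ y x, z⁆) + (⁅σ y z, x⁆ + ⁅σ z y, x⁆) - (⁅σ x z, y⁆ + ⁅σ z x, y⁆)
        + (σ z ⁅x, y⁆ + σ ⁅x, y⁆ z) - (σ x ⁅y, z⁆ + σ ⁅y, z⁆ x) = 0 := by
    intro x y z
    have a := hJ x y z
    have c := hJ z y x
    rw [skew x (σ y z)] at a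
    rw [skew z (σ y x), skew z y, skew z x, skew y x] at c
    simp only [map_neg, LinearMap.neg_apply, neg_neg] at a c
    linear_combination (norm := abel1) a + c
  have E3 : ∀ x y z : g, σ x ⁅y, z⁆ + σ ⁅y, z⁆ x = σ z ⁅x, y⁆ + σ ⁅x, y⁆ z := by
    intro x y z
    have e2 := E2 x y z
    have e1a := E1 x y z
    have e1b := E1 y z x
    have e1c := E1 x z y
    rw [skew z x, skew y x] at e1b
    rw [skew z y] at e1c
    simp only [map_neg, LinearMap.neg_apply, neg_neg] at e1b e1c
    linear_combination (norm := abel1) e2 - e1a - e1b + e1c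
  have E4 : ∀ x y z : g, σ y ⁅x, z⁆ + σ ⁅x, z⁆ y = -(σ x ⁅y, z⁆ + σ ⁅y, z⁆ x) := by
    intro x y z
    have h1 := E3 y x z
    have h2 := E3 x y z
    rw [skew y x] at h1
    simp only [map_neg, LinearMap.neg_apply, neg_neg] at h1
    linear_combination (norm := abel1) h1 + h2
  have hs : ∀ x y : g, σ x y + σ y x = 0 := by
    intro x y
    refine hcenter _ (fun z => ?_)
    rw [add_lie]
    have e1 := E1 x y z
    have e4 := E4 x y z
    linear_combination (norm := abel1) e1 + e4
  intro x y z
  have a := hJ x y z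
  rw [skew x (σ y z)] at a
  have s2 := hs x ⁅y, z⁆
  have s3 : σ z x = -(σ x z) := by
    have := hs x z; linear_combination (norm := abel1) this
  have s4 : σ ⁅z, x⁆ y = -(σ ⁅x, z⁆ y) := by
    rw [skew z x]; simp only [map_neg, LinearMap.neg_apply]
  rw [s3, s4, neg_lie]
  linear_combination (norm := abel1) a + s2

end AuxiliaryLemmas

set_option maxHeartbeats 1600000 in
/-- If `g` has trivial center, every BSD 2-cocycle `φ` of `X = k ⊕ g` is of the form
`Ψ²(σ)` for a Lie 2-cocycle `σ`, i.e. `φ((a,x)⊗(b,y)) = (0, σ(x,y))`.  Consequently `Ψ²`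
induces an isomorphism between second Lie cohomology and second BSD cohomology. -/
theorem stmt9 {k : Type*} [Field k] {g : Type*} [LieRing g] [LieAlgebra k g]
    (hcenter : ∀ x : g, (∀ y : g, ⁅x, y⁆ = 0) → x = 0)
    (φ : (k × g) ⊗[k] (k × g) →ₗ[k] (k × g))
    (hφ : IsBSD2Cochain k g φ) (hcocycle : bsdD2 k g φ = 0) :
    ∃ σ : g →ₗ[k] g →ₗ[k] g,
      (∀ x y z : g,
        ⁅σ x y, z⁆ + ⁅σ y z, x⁆ + ⁅σ z x, y⁆
          + σ ⁅x, y⁆ z + σ ⁅y, z⁆ x + σ ⁅z, x⁆ y = 0)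
      ∧ ∀ (a b : k) (x y : g), φ ((a, x) ⊗ₜ[k] (b, y)) = ((0 : k), σ x y) := by
  classical
  -- constraints from the 2-cochain condition
  have hc1 : (φ (((1:k),(0:g)) ⊗ₜ[k] ((1:k),(0:g)))).1 = 0 := by
    have h := congrArg (LinearMap.mul' k k ∘ₗ
        TensorProduct.map (LinearMap.fst k k g) (LinearMap.fst k k g))
      (LinearMap.congr_fun hφ (((1:k),(0:g)) ⊗ₜ[k] ((1:k),(0:g))))
    simpa [Dmap_apply', qmap_apply', TensorProduct.tmul_add, TensorProduct.add_tmul,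
      TensorProduct.tensorTensorTensorComm_tmul, Prod.mk_zero_zero] using h
  have hc2 : (φ (((1:k),(0:g)) ⊗ₜ[k] ((1:k),(0:g)))).2 = 0 := by
    refine aux_center (k := k) hcenter _ (fun x => ?_)
    have h := congrArg (TensorProduct.map (LinearMap.snd k k g) (LinearMap.snd k k g))
      (LinearMap.congr_fun hφ (((0:k),x) ⊗ₜ[k] ((1:k),(0:g))))
    simp only [Dmap_apply', qmap_apply', TensorProduct.tmul_add, TensorProduct.add_tmul,
      TensorProduct.tensorTensorTensorComm_tmul, Prod.mk_zero_zero, LinearMap.coe_comp,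
      Function.comp_apply, LinearMap.add_apply, LinearEquiv.coe_coe, TensorProduct.map_tmul,
      map_add, LinearMap.snd_apply, LinearMap.fst_apply, one_smul, zero_smul, smul_zero,
      lie_zero, zero_lie, TensorProduct.tmul_zero, TensorProduct.zero_tmul, add_zero,
      zero_add, mul_one, one_mul, mul_zero, zero_mul, map_zero, Prod.fst_zero,
      Prod.snd_zero] at h
    linear_combination (norm := abel1) -h
  have hB1 : ∀ x : g, (φ (((0:k),x) ⊗ₜ[k] ((1:k),(0:g)))).1 = 0 := by
    intro x
    have h := congrArg (LinearMap.mul' k k ∘ₗ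
        TensorProduct.map (LinearMap.fst k k g) (LinearMap.fst k k g))
      (LinearMap.congr_fun hφ (((0:k),x) ⊗ₜ[k] ((1:k),(0:g))))
    simpa [Dmap_apply', qmap_apply', TensorProduct.tmul_add, TensorProduct.add_tmul,
      TensorProduct.tensorTensorTensorComm_tmul, Prod.mk_zero_zero] using h
  have hA1 : ∀ y : g, (φ (((1:k),(0:g)) ⊗ₜ[k] ((0:k),y))).1 = 0 := by
    intro y
    have h := congrArg (LinearMap.mul' k k ∘ₗ
        TensorProduct.map (LinearMap.fst k k g) (LinearMap.fst k k g))
      (LinearMap.congr_fun hφ (((1:k),(0:g)) ⊗ₜ[k] ((0:k),y)))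
    simpa [Dmap_apply', qmap_apply', TensorProduct.tmul_add, TensorProduct.add_tmul,
      TensorProduct.tensorTensorTensorComm_tmul, Prod.mk_zero_zero] using h
  have hC1 : ∀ x y : g, (φ (((0:k),x) ⊗ₜ[k] ((0:k),y))).1 = 0 := by
    intro x y
    have h := congrArg (LinearMap.mul' k k ∘ₗ
        TensorProduct.map (LinearMap.fst k k g) (LinearMap.fst k k g))
      (LinearMap.congr_fun hφ (((0:k),x) ⊗ₜ[k] ((0:k),y)))
    simpa [Dmap_apply', qmap_apply', TensorProduct.tmul_add, TensorProduct.add_tmul,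
      TensorProduct.tensorTensorTensorComm_tmul, Prod.mk_zero_zero] using h
  have hA2 : ∀ y : g, (φ (((1:k),(0:g)) ⊗ₜ[k] ((0:k),y))).2 = 0 := by
    intro y
    refine aux_center (k := k) hcenter _ (fun x => ?_)
    have h := congrArg (TensorProduct.map (LinearMap.snd k k g) (LinearMap.snd k k g))
      (LinearMap.congr_fun hφ (((0:k),x) ⊗ₜ[k] ((0:k),y)))
    simp only [Dmap_apply', qmap_apply', TensorProduct.tmul_add, TensorProduct.add_tmul,
      TensorProduct.tensorTensorTensorComm_tmul, Prod.mk_zero_zero, LinearMap.coe_comp,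
      Function.comp_apply, LinearMap.add_apply, LinearEquiv.coe_coe, TensorProduct.map_tmul,
      map_add, LinearMap.snd_apply, LinearMap.fst_apply, one_smul, zero_smul, smul_zero,
      lie_zero, zero_lie, TensorProduct.tmul_zero, TensorProduct.zero_tmul, add_zero,
      zero_add, mul_one, one_mul, mul_zero, zero_mul, map_zero, Prod.fst_zero,
      Prod.snd_zero, hc2] at h
    linear_combination (norm := abel1) -h
  have hc : φ (((1:k),(0:g)) ⊗ₜ[k] ((1:k),(0:g))) = 0 := by
    rw [Prod.ext_iff]; exact ⟨by simpa using hc1, by simpa using hc2⟩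
  have hA : ∀ y : g, φ (((1:k),(0:g)) ⊗ₜ[k] ((0:k),y)) = 0 := by
    intro y
    rw [Prod.ext_iff]; exact ⟨by simpa using hA1 y, by simpa using hA2 y⟩
  -- constraints from the 2-cocycle condition
  have hbr : ∀ x z : g, (φ (((0:k),⁅x,z⁆) ⊗ₜ[k] ((1:k),(0:g)))).2
      = ⁅(φ (((0:k),x) ⊗ₜ[k] ((1:k),(0:g)))).2, z⁆ := by
    intro x z
    have h := congrArg Prod.snd (LinearMap.congr_fun hcocycle
      ((((0:k),x) ⊗ₜ[k] ((1:k),(0:g))) ⊗ₜ[k] ((0:k),z)))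
    simp [bsdD2, Smap, Dmap_apply', qmap_apply', TensorProduct.tmul_add,
      TensorProduct.add_tmul, TensorProduct.tensorTensorTensorComm_tmul, Prod.mk_zero_zero,
      sub_eq_iff_eq_add, hc1, hc2, hA1, hA2, hB1] at h
    rw [add_comm ((φ (((0:k),x) ⊗ₜ[k] ((0:k),z))).2)] at h
    exact (add_right_cancel h).symm
  have hder : ∀ x y : g, (φ (((0:k),⁅x,y⁆) ⊗ₜ[k] ((1:k),(0:g)))).2
      = ⁅x, (φ (((0:k),y) ⊗ₜ[k] ((1:k),(0:g)))).2⁆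
        + ⁅(φ (((0:k),x) ⊗ₜ[k] ((1:k),(0:g)))).2, y⁆ := by
    intro x y
    have h := congrArg Prod.snd (LinearMap.congr_fun hcocycle
      ((((0:k),x) ⊗ₜ[k] ((0:k),y)) ⊗ₜ[k] ((1:k),(0:g))))
    simp [bsdD2, Smap, Dmap_apply', qmap_apply', TensorProduct.tmul_add,
      TensorProduct.add_tmul, TensorProduct.tensorTensorTensorComm_tmul, Prod.mk_zero_zero,
      sub_eq_iff_eq_add, hc1, hc2, hA1, hA2, hB1] at h
    linear_combination (norm := abel1) h
  have hB0 : ∀ y : g, (φ (((0:k),y) ⊗ₜ[k] ((1:k),(0:g)))).2 = 0 := by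
    intro y
    refine hcenter _ (fun x => ?_)
    have h1 := hder x y
    have h2 := hbr x y
    have h3 : ⁅x, (φ (((0:k),y) ⊗ₜ[k] ((1:k),(0:g)))).2⁆ = 0 := by
      linear_combination (norm := abel1) h2 - h1
    rw [← lie_skew, h3, neg_zero]
  have hBfull : ∀ x : g, φ (((0:k),x) ⊗ₜ[k] ((1:k),(0:g))) = 0 := by
    intro x
    rw [Prod.ext_iff]; exact ⟨by simpa using hB1 x, by simpa using hB0 x⟩
  -- define σ
  refine ⟨LinearMap.mk₂ k (fun x y => (φ (((0:k),x) ⊗ₜ[k] ((0:k),y))).2)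
    (fun m m' n => by
      rw [show ((0:k), m+m') = ((0:k),m) + ((0:k),m') by simp, TensorProduct.add_tmul,
        map_add]; rfl)
    (fun c m n => by
      rw [show ((0:k), c • m) = c • ((0:k),m) by simp, ← TensorProduct.smul_tmul',
        map_smul]; rfl)
    (fun m n n' => by
      rw [show ((0:k), n+n') = ((0:k),n) + ((0:k),n') by simp, TensorProduct.tmul_add,
        map_add]; rfl)
    (fun c m n => by
      rw [show ((0:k), c • n) = c • ((0:k),n) by simp, TensorProduct.tmul_smul,
        map_smul]; rfl), ?_, ?_⟩
  · -- the Lie 2-cocycle condition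
    apply lie_two_cocycle_of_J hcenter
    intro x y z
    simp only [LinearMap.mk₂_apply]
    have h := congrArg Prod.snd (LinearMap.congr_fun hcocycle
      ((((0:k),x) ⊗ₜ[k] ((0:k),y)) ⊗ₜ[k] ((0:k),z)))
    simp [bsdD2, Smap, Dmap_apply', qmap_apply', TensorProduct.tmul_add,
      TensorProduct.add_tmul, TensorProduct.tensorTensorTensorComm_tmul, Prod.mk_zero_zero,
      sub_eq_iff_eq_add, hB1, hB0, hC1] at h
    linear_combination (norm := abel1) h
  · -- the value formula
    intro a b x y
    simp only [LinearMap.mk₂_apply]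
    have e1 : ((a,x) : k × g) = a • ((1:k),(0:g)) + ((0:k),x) := by simp
    have e2 : ((b,y) : k × g) = b • ((1:k),(0:g)) + ((0:k),y) := by simp
    rw [e1, e2, TensorProduct.add_tmul, TensorProduct.tmul_add, TensorProduct.tmul_add,
      map_add, map_add, map_add]
    simp only [← TensorProduct.smul_tmul', TensorProduct.tmul_smul, map_smul, hc, hA,
      hBfull, smul_zero, add_zero, zero_add]
    rw [Prod.ext_iff]
    exact ⟨by simpa using hC1 x y, rfl⟩


end
end
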